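/- arXiv:2103.15994 — 3 statements merged into one kernel-verified Lean document; each statement's English description precedes it below -/
import Mathlib

section
/- Let t : Fin n → ℝ. Split {0,…,n−1} into two disjoint halves Q₁, Q₂ each of size n/2 (n even), with Q₁ ∪ Q₂ covering everything. Define V(S) = n·∑_{h∈S} t_h² − (∑_{h∈S} t_h)². Then for every subset S of indices that is an interval (or any subset), max(V(Q₁), V(Q₂)) ≥ (1/4)·V(S). -/
/-- Median-split 4-approximation: with V(S) = n∑_S t² − (∑_S t)² and Q₁, Q₂ disjoint
halves of size n/2 covering everything, max(V Q₁, V Q₂) ≥ (1/4)·V S for every S. -/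
theorem stmt_6 (n : ℕ) (hn : Even n) (t : Fin n → ℝ) (Q1 Q2 : Finset (Fin n))
    (hdisj : Disjoint Q1 Q2) (hunion : Q1 ∪ Q2 = Finset.univ)
    (h1 : Q1.card = n / 2) (h2 : Q2.card = n / 2) (S : Finset (Fin n)) :
    (1 / 4) * ((n : ℝ) * ∑ h ∈ S, (t h) ^ 2 - (∑ h ∈ S, t h) ^ 2) ≤
      max ((n : ℝ) * ∑ h ∈ Q1, (t h) ^ 2 - (∑ h ∈ Q1, t h) ^ 2)
          ((n : ℝ) * ∑ h ∈ Q2, (t h) ^ 2 - (∑ h ∈ Q2, t h) ^ 2) := by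
  set A := ∑ h ∈ Q1, (t h) ^ 2 with hA
  set B := ∑ h ∈ Q2, (t h) ^ 2 with hB
  -- half card as real
  have hcard : ((n / 2 : ℕ) : ℝ) = (n : ℝ) / 2 := by
    obtain ⟨k, rfl⟩ := hn
    have : (k + k) / 2 = k := by omega
    rw [this]; push_cast; ring
  -- Cauchy–Schwarz for each half
  have cs1 : (∑ h ∈ Q1, t h) ^ 2 ≤ (n : ℝ) / 2 * A := by
    have := sq_sum_le_card_mul_sum_sq (s := Q1) (f := t)
    rw [h1] at this; push_cast at this; rw [hcard] at this; exact this
  have cs2 : (∑ h ∈ Q2, t h) ^ 2 ≤ (n : ℝ) / 2 * B := by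
    have := sq_sum_le_card_mul_sum_sq (s := Q2) (f := t)
    rw [h2] at this; push_cast at this; rw [hcard] at this; exact this
  have hV1 : (n : ℝ) / 2 * A ≤ (n : ℝ) * A - (∑ h ∈ Q1, t h) ^ 2 := by linarith
  have hV2 : (n : ℝ) / 2 * B ≤ (n : ℝ) * B - (∑ h ∈ Q2, t h) ^ 2 := by linarith
  -- ∑_S t² ≤ A + B
  have hS : ∑ h ∈ S, (t h) ^ 2 ≤ A + B := by
    rw [hA, hB, ← Finset.sum_union hdisj, hunion]
    exact Finset.sum_le_sum_of_subset_of_nonneg (Finset.subset_univ S)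
      (fun i _ _ => sq_nonneg (t i))
  have hnn : (0 : ℝ) ≤ (n : ℝ) := Nat.cast_nonneg n
  have hsq : (0 : ℝ) ≤ (∑ h ∈ S, t h) ^ 2 := sq_nonneg _
  rcases le_total A B with hAB | hAB
  · refine le_trans ?_ (le_max_of_le_right hV2)
    nlinarith
  · refine le_trans ?_ (le_max_of_le_left hV1)
    nlinarith
end

section
/- Let n, δm be positive with n ≥ 2·δm, and t : Fin n → ℝ. Define for a subset S, V_avg(S) = (1/|S|²)·(n·∑_{h∈S} t_h² − (∑_{h∈S} t_h)²). If S* maximizes V_avg among nonempty subsets with |S| ≥ δm, then |S*| < 2·δm. -/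
/-- The AVG query with the largest variance among subsets with ≥ δm samples has fewer
than 2δm samples (its cardinality assumed even so it can be split into equal halves). -/
theorem stmt_7 (n δm : ℕ) (hδ : 0 < δm) (hn : 2 * δm ≤ n) (t : Fin n → ℝ)
    (Sstar : Finset (Fin n)) (hne : Sstar.Nonempty) (hge : δm ≤ Sstar.card)
    (heven : Even Sstar.card)
    (hmax : ∀ S : Finset (Fin n), S.Nonempty → δm ≤ S.card → S ≠ Sstar →
      (1 / (S.card : ℝ) ^ 2) * ((n : ℝ) * ∑ h ∈ S, (t h) ^ 2 - (∑ h ∈ S, t h) ^ 2) <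
        (1 / (Sstar.card : ℝ) ^ 2) *
          ((n : ℝ) * ∑ h ∈ Sstar, (t h) ^ 2 - (∑ h ∈ Sstar, t h) ^ 2)) :
    Sstar.card < 2 * δm := by
  by_contra hlt
  push_neg at hlt
  obtain ⟨k, hk⟩ := heven
  have hkδ : δm ≤ k := by omega
  have hkpos : 0 < k := by omega
  have hmn : Sstar.card ≤ n := le_trans (Finset.card_le_univ _) (by simp)
  obtain ⟨A, hAsub, hAcard⟩ := Finset.exists_subset_card_eq (show k ≤ Sstar.card by omega)
  have hBcard : (Sstar \ A).card = k := by
    rw [Finset.card_sdiff_of_subset hAsub, hAcard]; omega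
  have hsplit : ∑ h ∈ Sstar, (t h)^2 = ∑ h ∈ A, (t h)^2 + ∑ h ∈ Sstar \ A, (t h)^2 := by
    rw [← Finset.sum_sdiff hAsub]; ring
  have hex : ∃ S1, S1 ⊆ Sstar ∧ S1.card = k ∧
      (∑ h ∈ Sstar, (t h)^2) ≤ 2 * ∑ h ∈ S1, (t h)^2 := by
    rcases le_total (∑ h ∈ A, (t h)^2) (∑ h ∈ Sstar \ A, (t h)^2) with hc | hc
    · exact ⟨Sstar \ A, Finset.sdiff_subset, hBcard, by rw [hsplit]; linarith⟩
    · exact ⟨A, hAsub, hAcard, by rw [hsplit]; linarith⟩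
  obtain ⟨S1, hsub, hcard, hhalf⟩ := hex
  have hS1ne : S1.Nonempty := Finset.card_pos.mp (by omega)
  have hS1neq : S1 ≠ Sstar := by
    intro h; rw [h] at hcard; omega
  have key := hmax S1 hS1ne (by omega) hS1neq
  have hc1 : (S1.card : ℝ) = (k : ℝ) := by exact_mod_cast congrArg Nat.cast hcard
  have hc2 : (Sstar.card : ℝ) = 2 * (k : ℝ) := by
    rw [hk]; push_cast; ring
  rw [hc1, hc2] at key
  have hCS : (∑ h ∈ S1, t h) ^ 2 ≤ (k : ℝ) * ∑ h ∈ S1, (t h) ^ 2 := by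
    have := sq_sum_le_card_mul_sum_sq (s := S1) (f := t)
    rwa [hcard] at this
  have hA1 : (0 : ℝ) ≤ ∑ h ∈ S1, (t h) ^ 2 :=
    Finset.sum_nonneg fun i _ => sq_nonneg _
  have hQ : (0 : ℝ) ≤ ∑ h ∈ Sstar, (t h) ^ 2 :=
    Finset.sum_nonneg fun i _ => sq_nonneg _
  have hs2 : (0 : ℝ) ≤ (∑ h ∈ Sstar, t h) ^ 2 := sq_nonneg _
  have hkr : (0 : ℝ) < (k : ℝ) := by exact_mod_cast hkpos
  have h2kn : 2 * (k : ℝ) ≤ (n : ℝ) := by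
    have : 2 * k ≤ n := by omega
    exact_mod_cast this
  rw [one_div_mul_eq_div, one_div_mul_eq_div,
    div_lt_div_iff₀ (by positivity) (by positivity)] at key
  set a := ∑ h ∈ S1, (t h)^2
  set Q := ∑ h ∈ Sstar, (t h)^2
  have hk2 : (0:ℝ) ≤ (k:ℝ)^2 := sq_nonneg _
  have hnn : (0:ℝ) ≤ (n:ℝ) := by positivity
  have step1 : 2 * (∑ h ∈ S1, t h)^2 ≤ (n:ℝ) * a := by nlinarith
  have step3 : 2*(n:ℝ)*a*(k:ℝ)^2 ≤ ((n:ℝ)*a - (∑ h ∈ S1, t h)^2) * (2*(k:ℝ))^2 := by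
    nlinarith [mul_nonneg hk2 (show (0:ℝ) ≤ (n:ℝ)*a - 2*(∑ h ∈ S1, t h)^2 by linarith)]
  have step4 : (n:ℝ)*Q*(k:ℝ)^2 ≤ 2*(n:ℝ)*a*(k:ℝ)^2 := by
    nlinarith [mul_nonneg hnn hk2]
  have step5 : ((n:ℝ)*Q - (∑ h ∈ Sstar, t h)^2)*(k:ℝ)^2 ≤ (n:ℝ)*Q*(k:ℝ)^2 := by
    nlinarith [mul_nonneg hs2 hk2]
  linarith
end

section
/- Let t : Fin n → ℝ, δm > 0 with n ≥ 2δm, and define V_avg(S) = (1/|S|²)·(n·∑_{h∈S} t_h² − (∑_{h∈S} t_h)²). Let q' be a subset of size exactly δm maximizing ∑_{h∈q'} t_h² among all size-δm subsets from a family covering q*, and let q* be a subset with δm ≤ |q*| < 2δm covered by the union of two size-δm subsets of the family. Then V_avg(q') ≥ (1/4)·V_avg(q*). -/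
/-- Approximation guarantee for maximum-variance AVG queries: if q' has maximal sum of
squares among the size-δm sets of a family, and q* (with δm ≤ |q*| < 2δm) is covered by
two members of the family, then V_avg(q') ≥ (1/4)·V_avg(q*). -/
theorem stmt_8 (n δm : ℕ) (hδ : 0 < δm) (hn : 2 * δm ≤ n) (t : Fin n → ℝ)
    (F : Set (Finset (Fin n))) (hF : ∀ A ∈ F, A.card = δm)
    (q' qstar : Finset (Fin n)) (hq'F : q' ∈ F)
    (hmax : ∀ A ∈ F, ∑ h ∈ A, (t h) ^ 2 ≤ ∑ h ∈ q', (t h) ^ 2)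
    (hcov : ∃ A ∈ F, ∃ B ∈ F, qstar ⊆ A ∪ B)
    (hlo : δm ≤ qstar.card) (hhi : qstar.card < 2 * δm) :
    (1 / 4) * ((1 / (qstar.card : ℝ) ^ 2) *
        ((n : ℝ) * ∑ h ∈ qstar, (t h) ^ 2 - (∑ h ∈ qstar, t h) ^ 2)) ≤
      (1 / (q'.card : ℝ) ^ 2) *
        ((n : ℝ) * ∑ h ∈ q', (t h) ^ 2 - (∑ h ∈ q', t h) ^ 2) := by
  obtain ⟨A, hA, B, hB, hsub⟩ := hcov
  have hq'card : q'.card = δm := hF q' hq'F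
  set S' : ℝ := ∑ h ∈ q', (t h) ^ 2 with hS'
  set Sstar : ℝ := ∑ h ∈ qstar, (t h) ^ 2 with hSstar
  have hS'0 : 0 ≤ S' := Finset.sum_nonneg fun i _ => sq_nonneg _
  -- S* ≤ 2 S'
  have h1 : Sstar ≤ ∑ h ∈ A ∪ B, (t h) ^ 2 :=
    Finset.sum_le_sum_of_subset_of_nonneg hsub (fun i _ _ => sq_nonneg _)
  have h2 : ∑ h ∈ A ∪ B, (t h) ^ 2 ≤ (∑ h ∈ A, (t h) ^ 2) + ∑ h ∈ B, (t h) ^ 2 := by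
    have := Finset.sum_union_inter (s₁ := A) (s₂ := B) (f := fun h => (t h) ^ 2)
    have hI : (0:ℝ) ≤ ∑ h ∈ A ∩ B, (t h) ^ 2 := Finset.sum_nonneg fun i _ => sq_nonneg _
    linarith
  have hcover : Sstar ≤ 2 * S' := by
    have hA' := hmax A hA
    have hB' := hmax B hB
    linarith
  -- Cauchy–Schwarz on q'
  have hcs : (∑ h ∈ q', t h) ^ 2 ≤ (q'.card : ℝ) * S' :=
    sq_sum_le_card_mul_sum_sq
  have hcard : (q'.card : ℝ) = (δm : ℝ) := by exact_mod_cast congrArg Nat.cast hq'card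
  have hn' : 2 * (δm : ℝ) ≤ (n : ℝ) := by exact_mod_cast hn
  have hδ' : (1 : ℝ) ≤ (δm : ℝ) := by exact_mod_cast hδ
  have hcstar : (δm : ℝ) ≤ (qstar.card : ℝ) := by exact_mod_cast hlo
  have hlb : (n : ℝ) * S' - (∑ h ∈ q', t h) ^ 2 ≥ ((n : ℝ) / 2) * S' := by
    have : (∑ h ∈ q', t h) ^ 2 ≤ ((n : ℝ) / 2) * S' := by
      calc (∑ h ∈ q', t h) ^ 2 ≤ (q'.card : ℝ) * S' := hcs
        _ ≤ ((n : ℝ) / 2) * S' := by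
            apply mul_le_mul_of_nonneg_right _ hS'0
            rw [hcard]; linarith
    linarith
  -- upper bound on qstar variance term
  have hn0 : (0:ℝ) ≤ (n : ℝ) := Nat.cast_nonneg n
  have hSstar0 : 0 ≤ Sstar := Finset.sum_nonneg fun i _ => sq_nonneg _
  have hub1 : (n : ℝ) * Sstar - (∑ h ∈ qstar, t h) ^ 2 ≤ (n : ℝ) * Sstar := by
    nlinarith [sq_nonneg (∑ h ∈ qstar, t h)]
  have hcpos : (0:ℝ) < (qstar.card : ℝ) := by linarith
  have hdpos : (0:ℝ) < (δm : ℝ) := by linarith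
  have hub : (1 / (qstar.card : ℝ) ^ 2) * ((n : ℝ) * Sstar - (∑ h ∈ qstar, t h) ^ 2)
      ≤ (1 / (δm : ℝ) ^ 2) * ((n : ℝ) * Sstar) := by
    have hs1 : (1 / (qstar.card : ℝ) ^ 2) * ((n : ℝ) * Sstar - (∑ h ∈ qstar, t h) ^ 2)
        ≤ (1 / (qstar.card : ℝ) ^ 2) * ((n : ℝ) * Sstar) := by
      apply mul_le_mul_of_nonneg_left hub1
      positivity
    have hs2 : (1 / (qstar.card : ℝ) ^ 2) ≤ (1 / (δm : ℝ) ^ 2) := by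
      apply one_div_le_one_div_of_le (by positivity)
      nlinarith
    have hs3 : (1 / (qstar.card : ℝ) ^ 2) * ((n : ℝ) * Sstar)
        ≤ (1 / (δm : ℝ) ^ 2) * ((n : ℝ) * Sstar) := by
      apply mul_le_mul_of_nonneg_right hs2 (by positivity)
    linarith
  -- combine
  rw [hcard]
  have hrhs : (1 / (δm : ℝ) ^ 2) * (((n : ℝ) / 2) * S')
      ≤ (1 / (δm : ℝ) ^ 2) * ((n : ℝ) * S' - (∑ h ∈ q', t h) ^ 2) := by
    apply mul_le_mul_of_nonneg_left (by linarith) (by positivity)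
  have hmid : (1 / 4) * ((1 / (δm : ℝ) ^ 2) * ((n : ℝ) * Sstar))
      ≤ (1 / (δm : ℝ) ^ 2) * (((n : ℝ) / 2) * S') := by
    have h4 : (n : ℝ) * Sstar ≤ 4 * ((n : ℝ) / 2 * S') := by nlinarith
    have hd2 : (0:ℝ) < 1 / (δm : ℝ) ^ 2 := by positivity
    calc (1 / 4) * ((1 / (δm : ℝ) ^ 2) * ((n : ℝ) * Sstar))
        ≤ (1 / 4) * ((1 / (δm : ℝ) ^ 2) * (4 * ((n : ℝ) / 2 * S'))) := by
          apply mul_le_mul_of_nonneg_left (mul_le_mul_of_nonneg_left h4 hd2.le) (by norm_num)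
      _ = (1 / (δm : ℝ) ^ 2) * (((n : ℝ) / 2) * S') := by ring
  linarith
end
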